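/- arXiv:2402.18708 — 7 statements merged into one kernel-verified Lean document; each statement's English description precedes it below -/
import Mathlib

section
/- Let Ω be a countable type and let m be an arbitrary σ-algebra on Ω. Then there exists a countable partition S of Ω (a countable family of pairwise disjoint subsets of Ω whose union is all of Ω) such that m equals the σ-algebra generated by S. -/
/-- Every σ-algebra on a countable type is generated by a countable partition. -/
theorem sigmaAlgebra_eq_generateFrom_countable_partition
    {Ω : Type*} [Countable Ω] (m : MeasurableSpace Ω) :
    ∃ S : Set (Set Ω), S.Countable ∧ S.Pairwise Disjoint ∧ ⋃₀ S = Set.univ ∧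
      m = MeasurableSpace.generateFrom S := by
  letI : MeasurableSpace Ω := m
  refine ⟨Set.range measurableAtom, Set.countable_range _, ?_, ?_, ?_⟩
  · rintro _ ⟨x, rfl⟩ _ ⟨y, rfl⟩ hne
    rw [Set.disjoint_left]
    intro z hzx hzy
    apply hne
    have key : ∀ a z : Ω, z ∈ measurableAtom a → measurableAtom z = measurableAtom a := by
      intro a z hz
      apply Set.Subset.antisymm
      · intro w hw
        simp only [measurableAtom, Set.mem_iInter] at hw ⊢
        intro s hs hsm
        exact hw s (mem_of_mem_measurableAtom hz hsm hs) hsm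
      · intro w hw
        simp only [measurableAtom, Set.mem_iInter] at hw ⊢
        intro s hs hsm
        by_contra hws
        have : a ∈ sᶜ := by
          by_contra ha
          exact hws (hw s (not_not.mp ha) hsm)
        exact (mem_of_mem_measurableAtom hz hsm.compl this) hs
    rw [← key x z hzx, key y z hzy]
  · ext x
    simp only [Set.mem_sUnion, Set.mem_univ, iff_true]
    exact ⟨measurableAtom x, ⟨x, rfl⟩, mem_measurableAtom_self x⟩
  · refine le_antisymm ?_ (MeasurableSpace.generateFrom_le ?_)
    · intro s hs
      have hrepr : s = ⋃ y ∈ s, measurableAtom y := by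
        apply Set.Subset.antisymm
        · intro x hx
          exact Set.mem_biUnion hx (mem_measurableAtom_self x)
        · simp only [Set.iUnion_subset_iff]
          exact fun y hy => measurableAtom_subset hs hy
      rw [hrepr]
      exact MeasurableSet.biUnion (Set.to_countable s)
        (fun y _ => MeasurableSpace.measurableSet_generateFrom ⟨y, rfl⟩)
    · rintro _ ⟨x, rfl⟩
      exact MeasurableSet.measurableAtom_of_countable x
end

section
/- Let Ω and A be countable types, let m₁ ≤ m₂ be σ-algebras on Ω, let μ₁ be a probability measure with respect to m₁ and μ₂ a probability measure with respect to m₂ such that (m₂, μ₂) extends (m₁, μ₁). Let μ be a discrete probability distribution on A and κ₁ : A → (probability measures with respect to m₁) a family with μ₁ = bind(μ, κ₁). Then there exists a family κ₂ : A → (probability measures with respect to m₂) such that μ₂ = bind(μ, κ₂) and, for every a in the support of μ, (m₂, κ₂(a)) extends (m₁, κ₁(a)). -/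
/-!
Write `μ₁ = μ₂.trim hle` for the restriction of `μ₂` to `m₁`. For `a` in the support of `μ` we
have `μ a • κ₁ a ≤ μ₁`, so `κ₁ a ≪ μ₁` and `κ₂ a := μ₂.withDensity (dκ₁ a / dμ₁)` restricts to
`κ₁ a` on `m₁`, the density being `m₁`-measurable. The densities `dκ₁ a / dμ₁`, averaged
against `μ`, sum to `1` `μ₁`-almost everywhere, hence `μ₂`-almost everywhere, which gives
`μ₂ = bind(μ, κ₂)`.
-/

open MeasureTheory Measure
open scoped ENNReal

namespace MeasureTheory.Measure

variable {Ω ι : Type*}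

lemma trim_withDensity {m₁ m₂ : MeasurableSpace Ω} (hle : m₁ ≤ m₂) (μ : @Measure Ω m₂)
    {f : Ω → ℝ≥0∞} (hf : Measurable[m₁] f) :
    (μ.withDensity f).trim hle = (μ.trim hle).withDensity f := by
  refine @Measure.ext _ m₁ _ _ fun s hs => ?_
  rw [trim_measurableSet_eq hle hs, withDensity_apply _ (hle _ hs), withDensity_apply _ hs,
    setLIntegral_trim hle hf hs]

lemma trim_withDensity_rnDeriv {m₁ m₂ : MeasurableSpace Ω} (hle : m₁ ≤ m₂) (μ : @Measure Ω m₂)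
    {ν : @Measure Ω m₁} [ν.HaveLebesgueDecomposition (μ.trim hle)] (hν : ν ≪ μ.trim hle) :
    (μ.withDensity (ν.rnDeriv (μ.trim hle))).trim hle = ν := by
  rw [trim_withDensity hle μ (measurable_rnDeriv _ _), withDensity_rnDeriv_eq _ _ hν]

lemma absolutelyContinuous_sum_smul {m : MeasurableSpace Ω} {w : ι → ℝ≥0∞}
    {κ : ι → Measure Ω} {i : ι} (hi : w i ≠ 0) : κ i ≪ sum fun j => w j • κ j :=
  (absolutelyContinuous_smul hi).trans (absolutelyContinuous_of_le (le_sum _ i))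

lemma sum_smul_withDensity_eq_self_iff [Countable ι] {m : MeasurableSpace Ω} {μ : Measure Ω}
    [SigmaFinite μ] {w : ι → ℝ≥0∞} {f : ι → Ω → ℝ≥0∞} (hf : ∀ i, Measurable (f i)) :
    (sum fun i => w i • μ.withDensity (f i)) = μ ↔ (∑' i, w i • f i) =ᵐ[μ] 1 := by
  have hwf : ∀ i, Measurable (w i • f i) := fun i => (hf i).const_smul (w i)
  rw [← withDensity_eq_iff_of_sigmaFinite (Measurable.tsum' hwf).aemeasurable
    measurable_one.aemeasurable, withDensity_one, withDensity_tsum hwf]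
  simp only [withDensity_smul _ (hf _)]

lemma sum_smul_withDensity_rnDeriv_trim [Countable ι] {m₁ m₂ : MeasurableSpace Ω}
    (hle : m₁ ≤ m₂) (μ : @Measure Ω m₂) [SigmaFinite (μ.trim hle)] {w : ι → ℝ≥0∞}
    {κ : ι → @Measure Ω m₁} [∀ i, (κ i).HaveLebesgueDecomposition (μ.trim hle)]
    (h : (sum fun i => w i • κ i) = μ.trim hle) :
    (sum fun i => w i • μ.withDensity ((κ i).rnDeriv (μ.trim hle))) = μ := by
  have := SigmaFinite.of_trim (μ := μ) hle
  have hf : ∀ i, Measurable[m₁] ((κ i).rnDeriv (μ.trim hle)) := fun i => measurable_rnDeriv _ _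
  have hκ : ∀ i, w i • (μ.trim hle).withDensity ((κ i).rnDeriv (μ.trim hle)) = w i • κ i := by
    intro i
    rcases eq_or_ne (w i) 0 with hi | hi
    · simp only [hi, zero_smul]
    · rw [withDensity_rnDeriv_eq _ _
        ((absolutelyContinuous_sum_smul hi).trans h.le.absolutelyContinuous)]
  have hdens : (∑' i, w i • (κ i).rnDeriv (μ.trim hle)) =ᵐ[μ.trim hle] 1 :=
    (sum_smul_withDensity_eq_self_iff hf).mp (by simpa only [hκ] using h)
  exact (sum_smul_withDensity_eq_self_iff fun i => (hf i).mono hle le_rfl).mpr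
    (ae_eq_of_ae_eq_trim hdens)

end MeasureTheory.Measure

theorem bind_extend_general
    {Ω A : Type*} [Countable A]
    (m₁ m₂ : MeasurableSpace Ω) (hle : m₁ ≤ m₂)
    (μ₁ : @Measure Ω m₁) (μ₂ : @Measure Ω m₂)
    (hp₂ : @IsProbabilityMeasure Ω m₂ μ₂)
    (hext : ∀ E : Set Ω, MeasurableSet[m₁] E → μ₁ E = μ₂ E)
    (μ : PMF A) (κ₁ : A → @Measure Ω m₁)
    (hκ₁ : ∀ a, @IsProbabilityMeasure Ω m₁ (κ₁ a))
    (hbind : ∀ E : Set Ω, MeasurableSet[m₁] E → μ₁ E = ∑' a, μ a * κ₁ a E) :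
    ∃ κ₂ : A → @Measure Ω m₂,
      (∀ a, @IsProbabilityMeasure Ω m₂ (κ₂ a)) ∧
      (∀ E : Set Ω, MeasurableSet[m₂] E → μ₂ E = ∑' a, μ a * κ₂ a E) ∧
      (∀ a ∈ μ.support, ∀ E : Set Ω, MeasurableSet[m₁] E → κ₁ a E = κ₂ a E) := by
  classical
  have htrim : μ₂.trim hle = μ₁ := @Measure.ext _ m₁ _ _ fun E hE =>
    (trim_measurableSet_eq hle hE).trans (hext E hE).symm
  have hmix : (sum fun a => μ a • κ₁ a) = μ₁ := @Measure.ext _ m₁ _ _ fun E hE => by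
    simp [sum_apply _ hE, hbind E hE]
  subst htrim
  have : ∀ a, (κ₁ a).HaveLebesgueDecomposition (μ₂.trim hle) := fun a => inferInstance
  let ν : A → @Measure Ω m₂ := fun a => μ₂.withDensity ((κ₁ a).rnDeriv (μ₂.trim hle))
  have hν : ∀ a ∈ μ.support, (ν a).trim hle = κ₁ a := fun a ha =>
    trim_withDensity_rnDeriv hle μ₂ ((absolutelyContinuous_sum_smul
      ((μ.mem_support_iff a).mp ha)).trans hmix.le.absolutelyContinuous)
  refine ⟨fun a => if a ∈ μ.support then ν a else μ₂, fun a => ⟨?_⟩, fun E hE => ?_,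
    fun a ha E hE => ?_⟩
  · dsimp only
    split_ifs with ha
    · rw [← trim_measurableSet_eq hle MeasurableSet.univ, hν a ha, measure_univ]
    · exact measure_univ
  · conv_lhs => rw [← sum_smul_withDensity_rnDeriv_trim hle μ₂ hmix]
    rw [sum_apply _ hE]
    refine tsum_congr fun a => ?_
    dsimp only
    split_ifs with ha
    · rw [Measure.smul_apply, smul_eq_mul]
    · rw [(μ.mem_support_iff a).not_left.mp ha, zero_smul, zero_mul, coe_zero, Pi.zero_apply]
  · dsimp only
    rw [if_pos ha, ← trim_measurableSet_eq hle hE, hν a ha]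

/-- If `(m₂, μ₂)` extends `(m₁, μ₁)` and `μ₁` is the convex combination `bind(μ, κ₁)` of a
family `κ₁` of probability measures on `m₁` along a PMF `μ`, then there is a family `κ₂` of
probability measures on `m₂` with `μ₂ = bind(μ, κ₂)` and, for every `a` in the support of `μ`,
`(m₂, κ₂ a)` extends `(m₁, κ₁ a)`. -/
theorem bind_extend
    {Ω A : Type*} [Countable Ω] [Countable A]
    (m₁ m₂ : MeasurableSpace Ω) (hle : m₁ ≤ m₂)
    (μ₁ : @Measure Ω m₁) (μ₂ : @Measure Ω m₂)
    (hp₁ : @IsProbabilityMeasure Ω m₁ μ₁) (hp₂ : @IsProbabilityMeasure Ω m₂ μ₂)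
    (hext : ∀ E : Set Ω, MeasurableSet[m₁] E → μ₁ E = μ₂ E)
    (μ : PMF A) (κ₁ : A → @Measure Ω m₁)
    (hκ₁ : ∀ a, @IsProbabilityMeasure Ω m₁ (κ₁ a))
    (hbind : ∀ E : Set Ω, MeasurableSet[m₁] E → μ₁ E = ∑' a, μ a * κ₁ a E) :
    ∃ κ₂ : A → @Measure Ω m₂,
      (∀ a, @IsProbabilityMeasure Ω m₂ (κ₂ a)) ∧
      (∀ E : Set Ω, MeasurableSet[m₂] E → μ₂ E = ∑' a, μ a * κ₂ a E) ∧
      (∀ a ∈ μ.support, ∀ E : Set Ω, MeasurableSet[m₁] E → κ₁ a E = κ₂ a E) :=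
  bind_extend_general m₁ m₂ hle μ₁ μ₂ hp₂ hext μ κ₁ hκ₁ hbind
end

section
/- Let Ω₁ and Ω₂ be countable types with σ-algebras m₁ on Ω₁ and m₂ on Ω₂. Then every set E ⊆ Ω₁ × Ω₂ that is measurable with respect to the product σ-algebra m₁ ⊗ m₂ can be written as a countable disjoint union of measurable rectangles: there is a countable family of pairs (A_k, B_k) with each A_k m₁-measurable and each B_k m₂-measurable, such that the rectangles A_k × B_k are pairwise disjoint and E = ⋃_k (A_k × B_k). -/
open MeasureTheory Set

section Atoms

variable {Ω : Type*}

/-- The atom of a σ-algebra containing `x`: intersection of all measurable sets containing `x`. -/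
def matom (m : MeasurableSpace Ω) (x : Ω) : Set Ω :=
  ⋂ S ∈ {S : Set Ω | MeasurableSet[m] S ∧ x ∈ S}, S

lemma mem_matom_iff {m : MeasurableSpace Ω} {x y : Ω} :
    y ∈ matom m x ↔ ∀ S : Set Ω, MeasurableSet[m] S → x ∈ S → y ∈ S := by
  simp [matom]

lemma self_mem_matom {m : MeasurableSpace Ω} (x : Ω) : x ∈ matom m x :=
  mem_matom_iff.2 fun _ _ hx => hx

lemma matom_symm {m : MeasurableSpace Ω} {x y : Ω} (h : y ∈ matom m x) :
    x ∈ matom m y := by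
  rw [mem_matom_iff] at h ⊢
  intro S hS hy
  by_contra hx
  exact h Sᶜ hS.compl hx hy

lemma matom_eq_of_mem {m : MeasurableSpace Ω} {x y : Ω} (h : y ∈ matom m x) :
    matom m y = matom m x := by
  apply Set.Subset.antisymm
  · intro z hz
    rw [mem_matom_iff] at h hz ⊢
    exact fun S hS hx => hz S hS (h S hS hx)
  · intro z hz
    have h' := matom_symm h
    rw [mem_matom_iff] at h' hz ⊢
    exact fun S hS hy => hz S hS (h' S hS hy)

lemma matom_measurableSet {m : MeasurableSpace Ω} [Countable Ω] (x : Ω) :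
    MeasurableSet[m] (matom m x) := by
  classical
  have hsep : ∀ y : Ω, ∃ S : Set Ω, MeasurableSet[m] S ∧ x ∈ S ∧ (y ∉ matom m x → y ∉ S) := by
    intro y
    by_cases hy : y ∈ matom m x
    · exact ⟨Set.univ, MeasurableSet.univ, trivial, fun h => absurd hy h⟩
    · rw [mem_matom_iff] at hy
      push_neg at hy
      obtain ⟨S, hS, hxS, hyS⟩ := hy
      exact ⟨S, hS, hxS, fun _ => hyS⟩
  choose S hSm hxS hyS using hsep
  have : matom m x = ⋂ y : Ω, S y := by
    apply Set.Subset.antisymm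
    · intro z hz
      rw [mem_matom_iff] at hz
      exact Set.mem_iInter.2 fun y => hz (S y) (hSm y) (hxS y)
    · intro z hz
      by_contra hzm
      exact hyS z hzm (Set.mem_iInter.1 hz z)
  rw [this]
  exact MeasurableSet.iInter fun y => hSm y

end Atoms

lemma prod_saturated {Ω₁ Ω₂ : Type*} (m₁ : MeasurableSpace Ω₁) (m₂ : MeasurableSpace Ω₂)
    {E : Set (Ω₁ × Ω₂)} (hE : MeasurableSet[m₁.prod m₂] E) :
    ∀ p ∈ E, matom m₁ p.1 ×ˢ matom m₂ p.2 ⊆ E := by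
  let ms : MeasurableSpace (Ω₁ × Ω₂) :=
    { MeasurableSet' := fun F => ∀ p ∈ F, matom m₁ p.1 ×ˢ matom m₂ p.2 ⊆ F
      measurableSet_empty := by simp
      measurableSet_compl := by
        intro F hF p hp q hq
        intro hqF
        apply hp
        have h1 : p.1 ∈ matom m₁ q.1 := matom_symm hq.1
        have h2 : p.2 ∈ matom m₂ q.2 := matom_symm hq.2
        exact hF q hqF ⟨h1, h2⟩
      measurableSet_iUnion := by
        intro f hf p hp
        obtain ⟨i, hpi⟩ := Set.mem_iUnion.1 hp
        exact (hf i p hpi).trans (Set.subset_iUnion f i) }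
  have hle : m₁.prod m₂ ≤ ms := by
    apply sup_le
    · intro F hF
      obtain ⟨A, hA, rfl⟩ := hF
      intro p hp q hq
      exact mem_matom_iff.1 hq.1 A hA hp
    · intro F hF
      obtain ⟨B, hB, rfl⟩ := hF
      intro p hp q hq
      exact mem_matom_iff.1 hq.2 B hB hp
  exact hle E hE

/-- Over countable types, every set measurable for the product σ-algebra is a countable
disjoint union of measurable rectangles. -/
theorem prod_measurableSet_eq_disjoint_iUnion_rectangles
    {Ω₁ Ω₂ : Type*} [Countable Ω₁] [Countable Ω₂]
    (m₁ : MeasurableSpace Ω₁) (m₂ : MeasurableSpace Ω₂) (E : Set (Ω₁ × Ω₂))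
    (hE : MeasurableSet[m₁.prod m₂] E) :
    ∃ (A : ℕ → Set Ω₁) (B : ℕ → Set Ω₂),
      (∀ k, MeasurableSet[m₁] (A k)) ∧ (∀ k, MeasurableSet[m₂] (B k)) ∧
      Pairwise (Function.onFun Disjoint (fun k => A k ×ˢ B k)) ∧
      E = ⋃ k, A k ×ˢ B k := by
  classical
  rcases eq_empty_or_nonempty E with hEe | hEne
  · refine ⟨fun _ => ∅, fun _ => ∅, fun _ => MeasurableSet.empty, fun _ => MeasurableSet.empty,
      ?_, by simp [hEe]⟩
    intro i j _
    simp [Function.onFun]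
  · have hne : Nonempty (Ω₁ × Ω₂) := ⟨hEne.some⟩
    obtain ⟨f, hf⟩ := exists_surjective_nat (Ω₁ × Ω₂)
    set P : ℕ → Prop := fun k => f k ∈ E ∧ ∀ j < k, ¬(f j ∈ E ∧
      matom m₁ (f j).1 = matom m₁ (f k).1 ∧ matom m₂ (f j).2 = matom m₂ (f k).2) with hP
    have hPdec : DecidablePred P := fun _ => Classical.dec _
    refine ⟨fun k => if P k then matom m₁ (f k).1 else ∅,
            fun k => if P k then matom m₂ (f k).2 else ∅, ?_, ?_, ?_, ?_⟩
    · intro k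
      dsimp only
      by_cases h : P k
      · rw [if_pos h]; exact matom_measurableSet _
      · rw [if_neg h]; exact MeasurableSet.empty
    · intro k
      dsimp only
      by_cases h : P k
      · rw [if_pos h]; exact matom_measurableSet _
      · rw [if_neg h]; exact MeasurableSet.empty
    · intro k l hkl
      simp only [Function.onFun]
      by_cases hk : P k
      · by_cases hl : P l
        · simp only [if_pos hk, if_pos hl]
          rw [Set.disjoint_left]
          rintro q ⟨hq1, hq2⟩ ⟨hq1', hq2'⟩
          have e1 : matom m₁ (f k).1 = matom m₁ (f l).1 := by
            rw [← matom_eq_of_mem hq1, ← matom_eq_of_mem hq1']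
          have e2 : matom m₂ (f k).2 = matom m₂ (f l).2 := by
            rw [← matom_eq_of_mem hq2, ← matom_eq_of_mem hq2']
          rcases Nat.lt_or_ge k l with h | h
          · exact hl.2 k h ⟨hk.1, e1, e2⟩
          · exact hk.2 l (lt_of_le_of_ne h (Ne.symm hkl)) ⟨hl.1, e1.symm, e2.symm⟩
        · simp [if_neg hl]
      · simp [if_neg hk]
    · apply Set.Subset.antisymm
      · intro p hp
        obtain ⟨k, hk⟩ := hf p
        have hex : ∃ n, f n ∈ E ∧ matom m₁ (f n).1 = matom m₁ p.1 ∧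
            matom m₂ (f n).2 = matom m₂ p.2 := ⟨k, by rw [hk]; exact ⟨hp, rfl, rfl⟩⟩
        have hn := Nat.find_spec hex
        set n := Nat.find hex with hndef
        have hPn : P n := by
          refine ⟨hn.1, fun j hj hc => Nat.find_min hex hj ?_⟩
          exact ⟨hc.1, by rw [hc.2.1, hn.2.1], by rw [hc.2.2, hn.2.2]⟩
        refine Set.mem_iUnion.2 ⟨n, ?_⟩
        simp only [if_pos hPn]
        refine ⟨?_, ?_⟩
        · show p.1 ∈ matom m₁ (f n).1
          rw [hn.2.1]; exact self_mem_matom p.1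
        · show p.2 ∈ matom m₂ (f n).2
          rw [hn.2.2]; exact self_mem_matom p.2
      · apply Set.iUnion_subset
        intro k
        by_cases h : P k
        · simp only [if_pos h]
          exact prod_saturated m₁ m₂ hE (f k) h.1
        · simp [if_neg h]
end

section
/- Let Ω be a countable type, let m_a and m_b be σ-algebras on Ω, and let μ_a and μ_b be probability measures with respect to m_a and m_b respectively. Suppose that μ_a(E_a) · μ_b(E_b) = 0 for all m_a-measurable E_a and m_b-measurable E_b with E_a ∩ E_b = ∅. Then the independent product of (m_a, μ_a) and (m_b, μ_b) exists: there is a probability measure μ with respect to the join σ-algebra m_a ⊔ m_b such that μ(E_a ∩ E_b) = μ_a(E_a) · μ_b(E_b) for every m_a-measurable E_a and every m_b-measurable E_b. -/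
open MeasureTheory MeasurableSpace Set

section Helpers

variable {Ω : Type*}

/-- The setoid whose classes are the measurable atoms. -/
def atomSetoid (Ω : Type*) [MeasurableSpace Ω] : Setoid Ω :=
  ⟨fun x y => measurableAtom x = measurableAtom y,
    ⟨fun _ => rfl, Eq.symm, Eq.trans⟩⟩

variable [MeasurableSpace Ω]

lemma atom_eq_of_mem {x y : Ω} (h : y ∈ measurableAtom x) :
    measurableAtom y = measurableAtom x := by
  have hsym : x ∈ measurableAtom y := by
    simp only [measurableAtom, Set.mem_iInter]
    intro s hys hs
    by_contra hx
    exact (mem_of_mem_measurableAtom h hs.compl hx) hys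
  apply Set.Subset.antisymm
  · intro z hz
    simp only [measurableAtom, Set.mem_iInter]
    intro s hxs hs
    exact mem_of_mem_measurableAtom hz hs (mem_of_mem_measurableAtom h hs hxs)
  · intro z hz
    simp only [measurableAtom, Set.mem_iInter]
    intro s hys hs
    exact mem_of_mem_measurableAtom hz hs (mem_of_mem_measurableAtom hsym hs hys)

open scoped Classical in
/-- Decomposition of the measure of a measurable set as a sum over atoms. -/
lemma tsum_atoms [Countable Ω] (μ : Measure Ω) {E : Set Ω} (hE : MeasurableSet E) :
    ∑' q : Quotient (atomSetoid Ω),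
      (if q.out ∈ E then μ (measurableAtom q.out) else 0) = μ E := by
  classical
  set f : Quotient (atomSetoid Ω) → Set Ω :=
    fun q => if q.out ∈ E then measurableAtom q.out else ∅ with hf
  have hUnion : (⋃ q, f q) = E := by
    apply Set.Subset.antisymm
    · refine Set.iUnion_subset fun q => ?_
      by_cases h : q.out ∈ E <;> simp [hf, h]
      exact measurableAtom_subset hE h
    · intro x hx
      have hq : (⟦x⟧ : Quotient (atomSetoid Ω)).out ∈ measurableAtom x := by
        have : measurableAtom (⟦x⟧ : Quotient (atomSetoid Ω)).out = measurableAtom x :=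
          Quotient.mk_out (s := atomSetoid Ω) x
        rw [← this]; exact mem_measurableAtom_self _
      have hq' : (⟦x⟧ : Quotient (atomSetoid Ω)).out ∈ E :=
        mem_of_mem_measurableAtom hq hE hx
      refine Set.mem_iUnion.2 ⟨⟦x⟧, ?_⟩
      simp only [hf, hq', if_true]
      rw [atom_eq_of_mem hq]
      exact mem_measurableAtom_self x
  have hdisj : Pairwise (Function.onFun Disjoint f) := by
    intro q q' hne
    rw [Function.onFun, Set.disjoint_left]
    intro z hz hz'
    simp only [hf] at hz hz'
    by_cases h1 : q.out ∈ E
    · by_cases h2 : q'.out ∈ E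
      · rw [if_pos h1] at hz; rw [if_pos h2] at hz'
        apply hne
        have e1 : measurableAtom z = measurableAtom q.out := atom_eq_of_mem hz
        have e2 : measurableAtom z = measurableAtom q'.out := atom_eq_of_mem hz'
        calc q = ⟦q.out⟧ := (Quotient.out_eq q).symm
          _ = ⟦q'.out⟧ := Quotient.sound (e1.symm.trans e2)
          _ = q' := Quotient.out_eq q'
      · rw [if_neg h2] at hz'; exact hz'
    · rw [if_neg h1] at hz; exact hz
  have hmeas : ∀ q, MeasurableSet (f q) := by
    intro q
    by_cases h : q.out ∈ E <;> simp [hf, h]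
    exact MeasurableSet.measurableAtom_of_countable _
  conv_rhs => rw [← hUnion]
  rw [measure_iUnion hdisj hmeas]
  exact tsum_congr fun q => by by_cases h : q.out ∈ E <;> simp [hf, h]

end Helpers

/-- Existence of the independent product of two probability spaces on a countable type,
under the compatibility condition that disjoint measurable sets have measures with
vanishing product. -/
theorem independent_product_exists
    {Ω : Type*} [Countable Ω]
    (ma mb : MeasurableSpace Ω)
    (μa : @Measure Ω ma) (μb : @Measure Ω mb)
    (hpa : @IsProbabilityMeasure Ω ma μa) (hpb : @IsProbabilityMeasure Ω mb μb)
    (h0 : ∀ Ea Eb : Set Ω, MeasurableSet[ma] Ea → MeasurableSet[mb] Eb →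
      Ea ∩ Eb = ∅ → μa Ea * μb Eb = 0) :
    ∃ μ : @Measure Ω (ma ⊔ mb), @IsProbabilityMeasure Ω (ma ⊔ mb) μ ∧
      ∀ Ea Eb : Set Ω, MeasurableSet[ma] Ea → MeasurableSet[mb] Eb →
        μ (Ea ∩ Eb) = μa Ea * μb Eb := by
  classical
  set Aa : Ω → Set Ω := fun x => @measurableAtom Ω ma x with hAa
  set Ab : Ω → Set Ω := fun x => @measurableAtom Ω mb x with hAb
  set Qa := Quotient (@atomSetoid Ω ma) with hQa
  set Qb := Quotient (@atomSetoid Ω mb) with hQb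
  set rep : Qa × Qb → Ω := fun p =>
    if h : (Aa p.1.out ∩ Ab p.2.out).Nonempty then h.choose else p.1.out with hrep
  set μ : @Measure Ω (ma ⊔ mb) := Measure.sum
    (fun p : Qa × Qb => (μa (Aa p.1.out) * μb (Ab p.2.out)) •
      @Measure.dirac Ω (ma ⊔ mb) (rep p)) with hμ
  have key : ∀ Ea Eb : Set Ω, MeasurableSet[ma] Ea → MeasurableSet[mb] Eb →
      μ (Ea ∩ Eb) = μa Ea * μb Eb := by
    intro Ea Eb hEa hEb
    have hEab : MeasurableSet[ma ⊔ mb] (Ea ∩ Eb) :=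
      ((le_sup_left : ma ≤ ma ⊔ mb) _ hEa).inter ((le_sup_right : mb ≤ ma ⊔ mb) _ hEb)
    rw [hμ, Measure.sum_apply _ hEab]
    have termwise : ∀ p : Qa × Qb,
        ((μa (Aa p.1.out) * μb (Ab p.2.out)) • @Measure.dirac Ω (ma ⊔ mb) (rep p)) (Ea ∩ Eb)
        = (if p.1.out ∈ Ea then μa (Aa p.1.out) else 0) *
          (if p.2.out ∈ Eb then μb (Ab p.2.out) else 0) := by
      intro p
      rw [Measure.smul_apply, smul_eq_mul, @Measure.dirac_apply' Ω (ma ⊔ mb) _ (rep p) hEab]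
      by_cases h : (Aa p.1.out ∩ Ab p.2.out).Nonempty
      · have hr : rep p ∈ Aa p.1.out ∩ Ab p.2.out := by
          rw [hrep]; simp only [dif_pos h]; exact h.choose_spec
        have hia : rep p ∈ Ea ↔ p.1.out ∈ Ea := by
          constructor
          · intro hrE
            have := @atom_eq_of_mem Ω ma _ _ hr.1
            have h1 : p.1.out ∈ @measurableAtom Ω ma (rep p) := by
              rw [this]; exact @mem_measurableAtom_self Ω ma _
            exact @mem_of_mem_measurableAtom Ω ma _ _ h1 Ea hEa hrE
          · intro hE
            exact @measurableAtom_subset Ω ma Ea _ hEa hE _ hr.1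
        have hib : rep p ∈ Eb ↔ p.2.out ∈ Eb := by
          constructor
          · intro hrE
            have := @atom_eq_of_mem Ω mb _ _ hr.2
            have h1 : p.2.out ∈ @measurableAtom Ω mb (rep p) := by
              rw [this]; exact @mem_measurableAtom_self Ω mb _
            exact @mem_of_mem_measurableAtom Ω mb _ _ h1 Eb hEb hrE
          · intro hE
            exact @measurableAtom_subset Ω mb Eb _ hEb hE _ hr.2
        rw [Set.indicator_apply]
        simp only [Set.mem_inter_iff, hia, hib, Pi.one_apply]
        by_cases h1 : p.1.out ∈ Ea <;> by_cases h2 : p.2.out ∈ Eb <;>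
          simp [h1, h2]
      · have hz : μa (Aa p.1.out) * μb (Ab p.2.out) = 0 := by
          apply h0 _ _ (@MeasurableSet.measurableAtom_of_countable Ω ma _ _)
            (@MeasurableSet.measurableAtom_of_countable Ω mb _ _)
          rwa [Set.not_nonempty_iff_eq_empty] at h
        rw [hz, zero_mul]
        symm
        by_cases h1 : p.1.out ∈ Ea
        · by_cases h2 : p.2.out ∈ Eb
          · rw [if_pos h1, if_pos h2, hz]
          · rw [if_neg h2, mul_zero]
        · rw [if_neg h1, zero_mul]
    calc ∑' p : Qa × Qb, ((μa (Aa p.1.out) * μb (Ab p.2.out)) •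
          @Measure.dirac Ω (ma ⊔ mb) (rep p)) (Ea ∩ Eb)
        = ∑' p : Qa × Qb, (if p.1.out ∈ Ea then μa (Aa p.1.out) else 0) *
            (if p.2.out ∈ Eb then μb (Ab p.2.out) else 0) := by
          exact tsum_congr termwise
      _ = ∑' qa : Qa, ∑' qb : Qb, (if qa.out ∈ Ea then μa (Aa qa.out) else 0) *
            (if qb.out ∈ Eb then μb (Ab qb.out) else 0) := ENNReal.tsum_prod'
      _ = (∑' qa : Qa, (if qa.out ∈ Ea then μa (Aa qa.out) else 0)) *
            (∑' qb : Qb, (if qb.out ∈ Eb then μb (Ab qb.out) else 0)) := by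
          rw [← ENNReal.tsum_mul_right]
          exact tsum_congr fun qa => ENNReal.tsum_mul_left
      _ = μa Ea * μb Eb := by
          rw [@tsum_atoms Ω ma _ μa Ea hEa, @tsum_atoms Ω mb _ μb Eb hEb]
  refine ⟨μ, ⟨?_⟩, key⟩
  have := key Set.univ Set.univ MeasurableSet.univ MeasurableSet.univ
  rw [Set.univ_inter, hpa.measure_univ, hpb.measure_univ, one_mul] at this
  exact this
end

section
/- Let Ω and A be countable types, let m₁ and m₂ be σ-algebras on Ω, let μ be a discrete probability distribution on A, let κ : A → (probability measures with respect to m₁) be a family, let μ₁ = bind(μ, κ), and let μ₂ be a probability measure with respect to m₂. If the independent product of (m₁, μ₁) and (m₂, μ₂) exists, then for every a in the support of μ the independent product of (m₁, κ(a)) and (m₂, μ₂) exists. -/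
open MeasureTheory

/-- If `μ₁ = bind(μ, κ)` and the independent product of `(m₁, μ₁)` and `(m₂, μ₂)` exists,
then for every `a` in the support of `μ` the independent product of `(m₁, κ a)` and
`(m₂, μ₂)` exists. -/
theorem fibre_independent_product_exists_of_bind
    {Ω A : Type*} [Countable Ω] [Countable A]
    (m₁ m₂ : MeasurableSpace Ω) (μ : PMF A)
    (κ : A → @Measure Ω m₁) (hκ : ∀ a, @IsProbabilityMeasure Ω m₁ (κ a))
    (μ₁ : @Measure Ω m₁)
    (hbind : ∀ E : Set Ω, MeasurableSet[m₁] E → μ₁ E = ∑' a, μ a * κ a E)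
    (μ₂ : @Measure Ω m₂) (hp₂ : @IsProbabilityMeasure Ω m₂ μ₂)
    (hindep : ∃ ρ : @Measure Ω (m₁ ⊔ m₂), @IsProbabilityMeasure Ω (m₁ ⊔ m₂) ρ ∧
      ∀ E₁ E₂ : Set Ω, MeasurableSet[m₁] E₁ → MeasurableSet[m₂] E₂ →
        ρ (E₁ ∩ E₂) = μ₁ E₁ * μ₂ E₂) :
    ∀ a ∈ μ.support, ∃ ρ : @Measure Ω (m₁ ⊔ m₂), @IsProbabilityMeasure Ω (m₁ ⊔ m₂) ρ ∧
      ∀ E₁ E₂ : Set Ω, MeasurableSet[m₁] E₁ → MeasurableSet[m₂] E₂ →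
        ρ (E₁ ∩ E₂) = κ a E₁ * μ₂ E₂ := by
  obtain ⟨ρ, hρp, hρ⟩ := hindep
  intro a ha
  -- μ₁ is a probability measure
  have hμ1univ : μ₁ Set.univ = 1 := by
    rw [hbind Set.univ MeasurableSet.univ]
    simp only [measure_univ]
    simp only [mul_one]; exact μ.tsum_coe
  have hp₁ : @IsProbabilityMeasure Ω m₁ μ₁ := ⟨hμ1univ⟩
  -- absolute continuity of κ a w.r.t. μ₁
  have haμ : μ a ≠ 0 := ha
  have hac : κ a ≪ μ₁ := by
    refine @Measure.AbsolutelyContinuous.mk Ω m₁ _ _ (fun E hE hE0 => ?_)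
    rw [hbind E hE] at hE0
    have := (ENNReal.tsum_eq_zero.mp hE0) a
    rcases mul_eq_zero.mp this with h | h
    · exact absurd h haμ
    · exact h
  -- Radon-Nikodym derivative
  set f : Ω → ENNReal := @Measure.rnDeriv Ω m₁ (κ a) μ₁ with hf
  have hfmeas : Measurable[m₁] f := @Measure.measurable_rnDeriv Ω m₁ (κ a) μ₁
  have hwd : @Measure.withDensity Ω m₁ μ₁ f = κ a :=
    @Measure.withDensity_rnDeriv_eq Ω m₁ (κ a) μ₁ _ hac
  have hfm : Measurable[m₁ ⊔ m₂] f := hfmeas.mono le_sup_left le_rfl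
  -- ρ restricted to m₁ is μ₁
  have hρ1 : ∀ E : Set Ω, MeasurableSet[m₁] E → ρ E = μ₁ E := fun E hE => by
    have := hρ E Set.univ hE MeasurableSet.univ
    simpa [measure_univ] using this
  have hρ2 : ∀ E : Set Ω, MeasurableSet[m₂] E → ρ E = μ₂ E := fun E hE => by
    have := hρ Set.univ E MeasurableSet.univ hE
    simpa [hμ1univ] using this
  have htrim : ρ.trim (le_sup_left : m₁ ≤ m₁ ⊔ m₂) = μ₁ := by
    refine @Measure.ext Ω m₁ _ _ (fun s hs => ?_)
    rw [trim_measurableSet_eq _ hs, hρ1 s hs]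
  -- lintegral over ρ of m₁-measurable functions equals lintegral over μ₁
  have hlint : ∀ g : Ω → ENNReal, Measurable[m₁] g →
      ∫⁻ ω, g ω ∂ρ = ∫⁻ ω, g ω ∂μ₁ := fun g hg => by
    rw [← htrim, lintegral_trim _ hg]
  -- independence
  have hInd : ProbabilityTheory.Indep m₁ m₂ ρ := by
    rw [ProbabilityTheory.Indep_iff]
    intro t1 t2 h1 h2
    rw [hρ t1 t2 h1 h2, hρ1 t1 h1, hρ2 t2 h2]
  refine ⟨ρ.withDensity f, ?_, ?_⟩
  · constructor
    rw [withDensity_apply _ MeasurableSet.univ, Measure.restrict_univ,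
      hlint f hfmeas, ← setLIntegral_univ,
      ← withDensity_apply _ MeasurableSet.univ, hwd]
    exact measure_univ
  · intro E₁ E₂ h1 h2
    have h1' : MeasurableSet[m₁ ⊔ m₂] E₁ := le_sup_left (α := MeasurableSpace Ω) E₁ h1
    have h2' : MeasurableSet[m₁ ⊔ m₂] E₂ := le_sup_right (α := MeasurableSpace Ω) E₂ h2
    rw [withDensity_apply _ (h1'.inter h2')]
    have hsplit : ∫⁻ ω in E₁ ∩ E₂, f ω ∂ρ
        = ∫⁻ ω, (E₁.indicator f) ω * (E₂.indicator (fun _ => (1:ENNReal))) ω ∂ρ := by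
      rw [← lintegral_indicator (h1'.inter h2')]
      congr 1
      ext ω
      by_cases hω1 : ω ∈ E₁ <;> by_cases hω2 : ω ∈ E₂ <;>
        simp [Set.indicator, hω1, hω2]
    rw [hsplit,
      ProbabilityTheory.lintegral_mul_eq_lintegral_mul_lintegral_of_independent_measurableSpace
        le_sup_left le_sup_right hInd (hfmeas.indicator h1)
        (measurable_const.indicator h2)]
    have hA : ∫⁻ ω, (E₁.indicator f) ω ∂ρ = κ a E₁ := by
      rw [hlint _ (hfmeas.indicator h1), lintegral_indicator h1,
        ← withDensity_apply _ h1, hwd]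
    have hB : ∫⁻ ω, (E₂.indicator (fun _ => (1:ENNReal))) ω ∂ρ = μ₂ E₂ := by
      rw [lintegral_indicator h2', lintegral_one, Measure.restrict_apply_univ, hρ2 E₂ h2]
    rw [hA, hB]
end

section
/- Let Ω be a countable type, let m_a and m_b be σ-algebras on Ω, and let μ_a and μ_b be probability measures with respect to m_a and m_b respectively, satisfying: μ_a(E_a) · μ_b(E_b) = 0 for all m_a-measurable E_a and m_b-measurable E_b with E_a ∩ E_b = ∅. Then for all m_a-measurable sets E_a, E_a' and all m_b-measurable sets E_b, E_b' with E_a ∩ E_b = E_a' ∩ E_b', one has μ_a(E_a) · μ_b(E_b) = μ_a(E_a') · μ_b(E_b'). -/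
open MeasureTheory

/-- Under the compatibility condition (disjoint measurable sets have measures with
vanishing product), the product `μa Ea * μb Eb` only depends on the intersection
`Ea ∩ Eb`. -/
theorem independent_product_well_defined
    {Ω : Type*} [Countable Ω]
    (ma mb : MeasurableSpace Ω)
    (μa : @Measure Ω ma) (μb : @Measure Ω mb)
    (hpa : @IsProbabilityMeasure Ω ma μa) (hpb : @IsProbabilityMeasure Ω mb μb)
    (h0 : ∀ Ea Eb : Set Ω, MeasurableSet[ma] Ea → MeasurableSet[mb] Eb →
      Ea ∩ Eb = ∅ → μa Ea * μb Eb = 0) :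
    ∀ Ea Ea' Eb Eb' : Set Ω, MeasurableSet[ma] Ea → MeasurableSet[ma] Ea' →
      MeasurableSet[mb] Eb → MeasurableSet[mb] Eb' →
      Ea ∩ Eb = Ea' ∩ Eb' → μa Ea * μb Eb = μa Ea' * μb Eb' := by
  have keya : ∀ Ea Eb S : Set Ω, MeasurableSet[ma] Ea → MeasurableSet[mb] Eb →
      MeasurableSet[ma] S → Ea ∩ Eb ⊆ S → μa Ea * μb Eb = μa (Ea ∩ S) * μb Eb := by
    intro Ea Eb S hEa hEb hS hsub
    have h1 : (Ea \ S) ∩ Eb = ∅ := by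
      ext x; simp only [Set.mem_inter_iff, Set.mem_diff, Set.mem_empty_iff_false, iff_false]
      rintro ⟨⟨hx1, hx2⟩, hx3⟩
      exact hx2 (hsub ⟨hx1, hx3⟩)
    have h2 := h0 (Ea \ S) Eb (hEa.diff hS) hEb h1
    have h3 : μa (Ea ∩ S) + μa (Ea \ S) = μa Ea := measure_inter_add_diff Ea hS
    rw [← h3, add_mul, h2, add_zero]
  have keyb : ∀ Ea Eb S : Set Ω, MeasurableSet[ma] Ea → MeasurableSet[mb] Eb →
      MeasurableSet[mb] S → Ea ∩ Eb ⊆ S → μa Ea * μb Eb = μa Ea * μb (Eb ∩ S) := by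
    intro Ea Eb S hEa hEb hS hsub
    have h1 : Ea ∩ (Eb \ S) = ∅ := by
      ext x; simp only [Set.mem_inter_iff, Set.mem_diff, Set.mem_empty_iff_false, iff_false]
      rintro ⟨hx1, hx2, hx3⟩
      exact hx3 (hsub ⟨hx1, hx2⟩)
    have h2 := h0 Ea (Eb \ S) hEa (hEb.diff hS) h1
    have h3 : μb (Eb ∩ S) + μb (Eb \ S) = μb Eb := measure_inter_add_diff Eb hS
    rw [← h3, mul_add, h2, add_zero]
  intro Ea Ea' Eb Eb' ha ha' hb hb' heq
  have s1 : Ea ∩ Eb ⊆ Ea' := heq ▸ Set.inter_subset_left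
  have s2 : (Ea ∩ Ea') ∩ Eb ⊆ Eb' := by
    intro x ⟨⟨hx1, _⟩, hx2⟩
    have : x ∈ Ea' ∩ Eb' := heq ▸ ⟨hx1, hx2⟩
    exact this.2
  have s1' : Ea' ∩ Eb' ⊆ Ea := heq ▸ Set.inter_subset_left
  have s2' : (Ea' ∩ Ea) ∩ Eb' ⊆ Eb := by
    intro x ⟨⟨hx1, _⟩, hx2⟩
    have : x ∈ Ea ∩ Eb := heq ▸ ⟨hx1, hx2⟩
    exact this.2
  calc μa Ea * μb Eb = μa (Ea ∩ Ea') * μb Eb := keya Ea Eb Ea' ha hb ha' s1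
    _ = μa (Ea ∩ Ea') * μb (Eb ∩ Eb') := keyb _ Eb Eb' (ha.inter ha') hb hb' s2
    _ = μa (Ea' ∩ Ea) * μb (Eb' ∩ Eb) := by rw [Set.inter_comm Ea, Set.inter_comm Eb]
    _ = μa Ea' * μb (Eb' ∩ Eb) := (keya Ea' (Eb' ∩ Eb) Ea ha' (hb'.inter hb) ha
          (fun x hx => (heq ▸ (⟨hx.1, hx.2.1⟩ : x ∈ Ea' ∩ Eb') : x ∈ Ea ∩ Eb).1)).symm
    _ = μa Ea' * μb Eb' := (keyb Ea' Eb' Eb ha' hb' hb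
          (fun x hx => (heq ▸ (⟨hx.1, hx.2⟩ : x ∈ Ea' ∩ Eb') : x ∈ Ea ∩ Eb).2)).symm
end

section
/- Let Ω be a countable type, let m_a and m_b be σ-algebras on Ω, and let μ_a and μ_b be probability measures with respect to m_a and m_b respectively, satisfying: μ_a(E) · μ_b(F) = 0 for all m_a-measurable E and m_b-measurable F with E ∩ F = ∅. Let E_a be m_a-measurable, E_b be m_b-measurable, and let (A_i)_{i∈ℕ} be m_a-measurable sets and (B_i)_{i∈ℕ} be m_b-measurable sets such that the sets A_i ∩ B_i are pairwise disjoint and E_a ∩ E_b = ⋃_{i∈ℕ} (A_i ∩ B_i). Then μ_a(E_a) · μ_b(E_b) = ∑_{i∈ℕ} μ_a(A_i) · μ_b(B_i). -/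
/-!
Consider the product measure `μa ⊗ μb` on `Ω × Ω`. By hypothesis it gives no mass to measurable
rectangles missing the diagonal. As `Ω` is countable, every product-measurable set is the countable
union of the rectangles of atoms it contains, so `μa ⊗ μb` is carried by the diagonal. There
`Ea ×ˢ Eb` and the rectangles `A i ×ˢ B i` trace out `Ea ∩ Eb` and the disjoint sets `A i ∩ B i`,
so the identity is countable additivity of `μa ⊗ μb`.
-/

open MeasureTheory Set

theorem Set.prod_inter_diagonal {α : Type*} (s t : Set α) :
    s ×ˢ t ∩ diagonal α = Function.diag '' (s ∩ t) := by
  ext ⟨x, y⟩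
  simp only [mem_inter_iff, mem_prod, mem_diagonal_iff, mem_image, Function.diag, Prod.mk.injEq]
  grind

section MeasurableAtom

variable {α β : Type*} [MeasurableSpace α] [MeasurableSpace β]

theorem MeasurableSet.measurableAtom_preimage_image {s : Set α} (hs : MeasurableSet s) :
    measurableAtom ⁻¹' (measurableAtom '' s) = s := by
  refine Subset.antisymm ?_ fun y hy => ⟨y, hy, rfl⟩
  rintro y ⟨x, hx, hxy⟩
  exact mem_of_mem_measurableAtom (hxy ▸ mem_measurableAtom_self y) hs hx

/-- Product-measurable sets are unions of fibres of `p ↦ (measurableAtom p.1, measurableAtom p.2)`,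
since these form a σ-algebra containing the measurable rectangles. -/
theorem measurableAtom_prod (x : α) (y : β) :
    measurableAtom (x, y) = measurableAtom x ×ˢ measurableAtom y := by
  refine Subset.antisymm (fun p hp => ?_) ?_
  · simp only [mem_prod, measurableAtom, mem_iInter]
    exact ⟨fun s hxs hs => mem_of_mem_measurableAtom hp (measurable_fst hs) hxs,
      fun t hyt ht => mem_of_mem_measurableAtom hp (measurable_snd ht) hyt⟩
  set f : α × β → Set α × Set β := fun p => (measurableAtom p.1, measurableAtom p.2)
  have hle : Prod.instMeasurableSpace ≤ MeasurableSpace.comap f ⊤ := by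
    refine sup_le ?_ ?_
    · rintro _ ⟨s, hs, rfl⟩
      exact ⟨(measurableAtom '' s) ×ˢ univ, trivial, by
        conv_rhs => rw [← hs.measurableAtom_preimage_image]
        ext p; simp [f]⟩
    · rintro _ ⟨t, ht, rfl⟩
      exact ⟨univ ×ˢ (measurableAtom '' t), trivial, by
        conv_rhs => rw [← ht.measurableAtom_preimage_image]
        ext p; simp [f]⟩
  rintro ⟨x', y'⟩ ⟨hx', hy'⟩
  simp only [measurableAtom, mem_iInter]
  intro S hxyS hS
  obtain ⟨T, -, rfl⟩ := hle S hS
  simpa [f, measurableAtom_eq_of_mem hx', measurableAtom_eq_of_mem hy'] using hxyS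

end MeasurableAtom

namespace MeasureTheory.Measure

variable {α β : Type*} [Countable α] [Countable β] {mα : MeasurableSpace α}
  {mβ : MeasurableSpace β} {μ : Measure α} {ν : Measure β} [SFinite ν] {D : Set (α × β)}

/-- `S` is the countable union of the atoms `measurableAtom p`, `p ∈ S`, which are rectangles
contained in `S`. -/
theorem prod_eq_zero_of_disjoint
    (h : ∀ s t, MeasurableSet s → MeasurableSet t → Disjoint (s ×ˢ t) D → μ s * ν t = 0)
    {S : Set (α × β)} (hS : MeasurableSet S) (hSD : Disjoint S D) : μ.prod ν S = 0 := by
  have hcover : S ⊆ ⋃ p ∈ S, measurableAtom p := fun p hp =>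
    mem_biUnion hp (mem_measurableAtom_self p)
  refine measure_mono_null hcover ((measure_biUnion_null_iff S.to_countable).2 fun p hp => ?_)
  have hsub : measurableAtom p ⊆ S := measurableAtom_subset hS hp
  rw [measurableAtom_prod] at hsub ⊢
  rw [prod_prod]
  exact h _ _ (.measurableAtom_of_countable _) (.measurableAtom_of_countable _)
    (hSD.mono_left hsub)

theorem prod_ae_eq_of_inter_eq
    (h : ∀ s t, MeasurableSet s → MeasurableSet t → Disjoint (s ×ˢ t) D → μ s * ν t = 0)
    {S T : Set (α × β)} (hS : MeasurableSet S) (hT : MeasurableSet T) (hST : S ∩ D = T ∩ D) :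
    S =ᵐ[μ.prod ν] T := by
  refine ae_eq_set.2 ⟨prod_eq_zero_of_disjoint h (hS.diff hT) ?_,
    prod_eq_zero_of_disjoint h (hT.diff hS) ?_⟩
  · exact disjoint_left.2 fun p hp hpD => hp.2 (hST ▸ ⟨hp.1, hpD⟩ : p ∈ T ∩ D).1
  · exact disjoint_left.2 fun p hp hpD => hp.2 (hST ▸ ⟨hp.1, hpD⟩ : p ∈ S ∩ D).1

theorem mul_eq_tsum_of_inter_eq {ι : Type*} [Countable ι]
    (h : ∀ s t, MeasurableSet s → MeasurableSet t → Disjoint (s ×ˢ t) D → μ s * ν t = 0)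
    {s : Set α} {t : Set β} (hs : MeasurableSet s) (ht : MeasurableSet t)
    {A : ι → Set α} {B : ι → Set β} (hA : ∀ i, MeasurableSet (A i)) (hB : ∀ i, MeasurableSet (B i))
    (hdisj : Pairwise fun i j => Disjoint (A i ×ˢ B i ∩ D) (A j ×ˢ B j ∩ D))
    (hunion : s ×ˢ t ∩ D = (⋃ i, A i ×ˢ B i) ∩ D) :
    μ s * ν t = ∑' i, μ (A i) * ν (B i) := by
  have hR : ∀ i, MeasurableSet (A i ×ˢ B i) := fun i => (hA i).prod (hB i)
  have hRdisj : Pairwise fun i j => AEDisjoint (μ.prod ν) (A i ×ˢ B i) (A j ×ˢ B j) :=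
    fun i j hij => prod_eq_zero_of_disjoint h ((hR i).inter (hR j)) <|
      disjoint_left.2 fun p hp hpD => disjoint_left.1 (hdisj hij) ⟨hp.1, hpD⟩ ⟨hp.2, hpD⟩
  calc μ s * ν t = μ.prod ν (s ×ˢ t) := (prod_prod _ _).symm
    _ = μ.prod ν (⋃ i, A i ×ˢ B i) :=
      measure_congr (prod_ae_eq_of_inter_eq h (hs.prod ht) (.iUnion hR) hunion)
    _ = ∑' i, μ.prod ν (A i ×ˢ B i) := measure_iUnion₀ hRdisj fun i => (hR i).nullMeasurableSet
    _ = ∑' i, μ (A i) * ν (B i) := tsum_congr fun i => prod_prod _ _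

end MeasureTheory.Measure

theorem independent_product_countably_additive_general
    {Ω : Type*} [Countable Ω]
    (ma mb : MeasurableSpace Ω)
    (μa : @Measure Ω ma) (μb : @Measure Ω mb)
    (hpb : @IsProbabilityMeasure Ω mb μb)
    (h0 : ∀ E F : Set Ω, MeasurableSet[ma] E → MeasurableSet[mb] F →
      E ∩ F = ∅ → μa E * μb F = 0)
    (Ea Eb : Set Ω) (hEa : MeasurableSet[ma] Ea) (hEb : MeasurableSet[mb] Eb)
    (A : ℕ → Set Ω) (B : ℕ → Set Ω)
    (hA : ∀ i, MeasurableSet[ma] (A i)) (hB : ∀ i, MeasurableSet[mb] (B i))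
    (hdisj : Pairwise (Function.onFun Disjoint (fun i => A i ∩ B i)))
    (hunion : Ea ∩ Eb = ⋃ i, A i ∩ B i) :
    μa Ea * μb Eb = ∑' i, μa (A i) * μb (B i) := by
  refine Measure.mul_eq_tsum_of_inter_eq (D := diagonal Ω) (fun s t hs ht hst => h0 s t hs ht ?_)
    hEa hEb hA hB (fun i j hij => ?_) ?_
  · rwa [disjoint_iff_inter_eq_empty, prod_inter_diagonal, image_eq_empty] at hst
  · dsimp only
    rw [prod_inter_diagonal, prod_inter_diagonal, disjoint_image_iff Function.diag_injective]
    exact hdisj hij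
  · simp_rw [prod_inter_diagonal, hunion, image_iUnion, iUnion_inter, prod_inter_diagonal]

/-- Countable additivity of the independent-product set function: if `Ea ∩ Eb` is the
disjoint union of the intersections `A i ∩ B i`, then
`μa Ea * μb Eb = ∑ᵢ μa (A i) * μb (B i)`. -/
theorem independent_product_countably_additive
    {Ω : Type*} [Countable Ω]
    (ma mb : MeasurableSpace Ω)
    (μa : @Measure Ω ma) (μb : @Measure Ω mb)
    (hpa : @IsProbabilityMeasure Ω ma μa) (hpb : @IsProbabilityMeasure Ω mb μb)
    (h0 : ∀ E F : Set Ω, MeasurableSet[ma] E → MeasurableSet[mb] F →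
      E ∩ F = ∅ → μa E * μb F = 0)
    (Ea Eb : Set Ω) (hEa : MeasurableSet[ma] Ea) (hEb : MeasurableSet[mb] Eb)
    (A : ℕ → Set Ω) (B : ℕ → Set Ω)
    (hA : ∀ i, MeasurableSet[ma] (A i)) (hB : ∀ i, MeasurableSet[mb] (B i))
    (hdisj : Pairwise (Function.onFun Disjoint (fun i => A i ∩ B i)))
    (hunion : Ea ∩ Eb = ⋃ i, A i ∩ B i) :
    μa Ea * μb Eb = ∑' i, μa (A i) * μb (B i) :=
  independent_product_countably_additive_general ma mb μa μb hpb h0 Ea Eb hEa hEb A B hA hB hdisj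
    hunion
end
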